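/- For every b ∈ (0,1) and every x > 0 the following two estimates hold: (i) 0 < b·φ_{1,b}(x) ≤ 4·b²·x·e^{−(1−b)x}; (ii) |(b + 1/b)·φ_{1,b}(x) − π·x·e^{−x}| ≤ b·x·e^{−(1−b)x}·( 4π/(1−b) + 4b + 4πx ). -/

import Mathlib

/-!
Write `r(η) = |e^{iη} - b| ∈ [1 - b, 1 + b]`. Integrating by parts against `cos = sin'` turns the
oscillating integrand of `φ_{1,b}(x)` into a nonnegative one:
`φ_{1,b}(x) = b ∫₀^{2π} x sin²η / r(η) · e^{-x r(η)} dη`.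
Since `|sin η| ≤ r(η)`, this integrand is at most `x |sin η| e^{-(1-b)x}`, and `∫₀^{2π} |sin| = 4`
gives (i). For (ii), `π x e^{-x} = ∫₀^{2π} x sin²η e^{-x} dη`, and pointwise the two integrands
differ by at most `2bx e^{-(1-b)x} |sin η| + b x² e^{-(1-b)x} sin²η`, because `|1 + b² - r| ≤ 2b`
and `|e^{-xr} - e^{-x}| ≤ bx e^{-(1-b)x}` by the mean value theorem. Integrating gives the bound
`bx e^{-(1-b)x} (8 + πx)`, and `8 ≤ 4π/(1-b)`.
-/

open MeasureTheory Real

noncomputable section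

namespace DCV17

def phi1b (b x : ℝ) : ℝ :=
  ∫ η in (0:ℝ)..(2*π), Real.exp (-x * Real.sqrt (1 + b^2 - 2*b*Real.cos η)) * Real.cos η

-- `|e^{iη} - b|`, the distance from `b` to a point of the unit circle.
def circleDist (b η : ℝ) : ℝ := √(1 + b ^ 2 - 2 * b * cos η)

section circleDist

variable {b : ℝ}

theorem one_sub_le_circleDist (hb : 0 ≤ b) (η : ℝ) : 1 - b ≤ circleDist b η :=
  (le_abs_self _).trans <| abs_le_sqrt <| by nlinarith [cos_le_one η]

theorem circleDist_le_one_add (hb : 0 ≤ b) (η : ℝ) : circleDist b η ≤ 1 + b :=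
  sqrt_le_iff.2 ⟨by linarith, by nlinarith [neg_one_le_cos η]⟩

theorem circleDist_pos (hb0 : 0 ≤ b) (hb1 : b < 1) (η : ℝ) : 0 < circleDist b η :=
  (sub_pos.2 hb1).trans_le (one_sub_le_circleDist hb0 η)

theorem abs_sin_le_circleDist (b η : ℝ) : |sin η| ≤ circleDist b η :=
  abs_le_sqrt <| by nlinarith [sin_sq_add_cos_sq η, sq_nonneg (cos η - b)]

theorem sin_sq_div_circleDist_le (b η : ℝ) : sin η ^ 2 / circleDist b η ≤ |sin η| :=
  div_le_of_le_mul₀ (sqrt_nonneg _) (abs_nonneg _) <| by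
    rw [← sq_abs, sq]
    exact mul_le_mul_of_nonneg_left (abs_sin_le_circleDist b η) (abs_nonneg _)

theorem continuous_circleDist (b : ℝ) : Continuous (circleDist b) := by
  unfold circleDist; fun_prop

theorem hasDerivAt_circleDist {η : ℝ} (h : circleDist b η ≠ 0) :
    HasDerivAt (circleDist b) (b * sin η / circleDist b η) η := by
  have hrad := ((hasDerivAt_cos η).const_mul (2 * b)).const_sub (1 + b ^ 2)
  refine (hrad.sqrt (sqrt_ne_zero'.1 h).ne').congr_deriv ?_
  unfold circleDist at h ⊢
  field_simp

end circleDist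

theorem abs_exp_neg_sub_exp_neg_le {m u v : ℝ} (hu : m ≤ u) (hv : m ≤ v) :
    |exp (-u) - exp (-v)| ≤ exp (-m) * |u - v| := by
  have := (convex_Ici m).norm_image_sub_le_of_norm_deriv_le (f := fun t => exp (-t))
    (C := exp (-m)) (fun t _ => by fun_prop) (fun t ht => ?_) hv hu
  · simpa only [Real.norm_eq_abs] using this
  · rw [((hasDerivAt_neg t).exp).deriv]
    simpa using Set.mem_Ici.1 ht

theorem integral_abs_sin_two_pi : ∫ η in (0:ℝ)..2 * π, |sin η| = 4 := by
  have hπ : ∫ η in (0:ℝ)..π, |sin η| = 2 := by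
    rw [intervalIntegral.integral_congr (g := sin), integral_sin, cos_zero, cos_pi]
    · norm_num
    · intro η hη
      rw [Set.uIcc_of_le pi_pos.le] at hη
      exact abs_of_nonneg (sin_nonneg_of_mem_Icc hη)
  have hshift : ∫ η in π..2 * π, |sin η| = ∫ η in (0:ℝ)..π, |sin η| := by
    rw [← zero_add π, show 2 * (0 + π) = π + π by ring,
      ← intervalIntegral.integral_comp_add_right]
    simp [sin_add_pi]
  rw [← intervalIntegral.integral_add_adjacent_intervals (b := π)
    (continuous_sin.abs.intervalIntegrable _ _) (continuous_sin.abs.intervalIntegrable _ _),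
    hshift, hπ]
  norm_num

theorem integral_sin_sq_two_pi : ∫ η in (0:ℝ)..2 * π, sin η ^ 2 = π := by
  rw [integral_sin_sq, sin_two_pi, sin_zero]
  ring

def phi1bIntegrand (b x η : ℝ) : ℝ :=
  x * sin η ^ 2 / circleDist b η * exp (-x * circleDist b η)

section phi1bIntegrand

variable {b x : ℝ}

theorem continuous_phi1bIntegrand (hb0 : 0 ≤ b) (hb1 : b < 1) (x : ℝ) :
    Continuous (phi1bIntegrand b x) := by
  have := continuous_circleDist b
  have hr η : circleDist b η ≠ 0 := (circleDist_pos hb0 hb1 η).ne'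
  unfold phi1bIntegrand
  fun_prop (disch := exact hr)

theorem phi1bIntegrand_nonneg (hx : 0 ≤ x) (η : ℝ) : 0 ≤ phi1bIntegrand b x η :=
  mul_nonneg (div_nonneg (by positivity) (sqrt_nonneg _)) (exp_pos _).le

theorem phi1bIntegrand_pos (hx : 0 < x) {η : ℝ} (hη : sin η ≠ 0) :
    0 < phi1bIntegrand b x η :=
  have hr : 0 < circleDist b η := (abs_pos.2 hη).trans_le (abs_sin_le_circleDist b η)
  mul_pos (div_pos (by positivity) hr) (exp_pos _)

theorem exp_neg_mul_circleDist_le (hb : 0 ≤ b) (hx : 0 ≤ x) (η : ℝ) :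
    exp (-x * circleDist b η) ≤ exp (-(1 - b) * x) :=
  exp_le_exp.2 <| by nlinarith [one_sub_le_circleDist hb η]

theorem phi1bIntegrand_le (hb : 0 ≤ b) (hx : 0 ≤ x) (η : ℝ) :
    phi1bIntegrand b x η ≤ x * exp (-(1 - b) * x) * |sin η| := by
  have h := mul_le_mul_of_nonneg_left (sin_sq_div_circleDist_le b η) hx
  rw [← mul_div_assoc] at h
  calc phi1bIntegrand b x η ≤ x * |sin η| * exp (-(1 - b) * x) :=
        mul_le_mul h (exp_neg_mul_circleDist_le hb hx η) (exp_pos _).le (by positivity)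
    _ = x * exp (-(1 - b) * x) * |sin η| := by ring

theorem abs_exp_neg_mul_circleDist_sub_exp_neg_le (hb : 0 ≤ b) (hx : 0 ≤ x) (η : ℝ) :
    |exp (-x * circleDist b η) - exp (-x)| ≤ b * x * exp (-(1 - b) * x) := by
  have hr_lower := one_sub_le_circleDist hb η
  have hr_upper := circleDist_le_one_add hb η
  have hmv := abs_exp_neg_sub_exp_neg_le (m := (1 - b) * x) (u := x * circleDist b η) (v := x)
    (by nlinarith) (by nlinarith)
  simp only [← neg_mul] at hmv
  refine hmv.trans (le_of_eq_of_le (mul_comm _ _) ?_)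
  exact mul_le_mul_of_nonneg_right (abs_le.2 ⟨by nlinarith, by nlinarith⟩) (exp_pos _).le

theorem abs_one_add_sq_mul_phi1bIntegrand_sub_le (hb0 : 0 ≤ b) (hb1 : b < 1) (hx : 0 ≤ x)
    (η : ℝ) :
    |(1 + b ^ 2) * phi1bIntegrand b x η - x * exp (-x) * sin η ^ 2|
      ≤ 2 * b * x * exp (-(1 - b) * x) * |sin η|
        + b * x ^ 2 * exp (-(1 - b) * x) * sin η ^ 2 := by
  have hr := circleDist_pos hb0 hb1 η
  have hr_lower := one_sub_le_circleDist hb0 η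
  have hr_upper := circleDist_le_one_add hb0 η
  have hexp := abs_exp_neg_mul_circleDist_sub_exp_neg_le hb0 hx η
  have hE := exp_neg_mul_circleDist_le hb0 hx η
  have hsin := sin_sq_div_circleDist_le b η
  unfold phi1bIntegrand
  set r := circleDist b η
  set E := exp (-(1 - b) * x)
  have hsplit : (1 + b ^ 2) * (x * sin η ^ 2 / r * exp (-x * r)) - x * exp (-x) * sin η ^ 2
      = x * (sin η ^ 2 / r) * exp (-x * r) * (1 + b ^ 2 - r)
        + x * sin η ^ 2 * (exp (-x * r) - exp (-x)) := by
    field_simp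
    ring
  have hcoeff : |1 + b ^ 2 - r| ≤ 2 * b := abs_le.2 ⟨by nlinarith, by nlinarith⟩
  rw [hsplit]
  calc _ ≤ x * (sin η ^ 2 / r) * exp (-x * r) * |1 + b ^ 2 - r|
          + x * sin η ^ 2 * |exp (-x * r) - exp (-x)| := by
        refine (abs_add_le _ _).trans_eq ?_
        have h1 : 0 ≤ x * (sin η ^ 2 / r) * exp (-x * r) := by positivity
        have h2 : 0 ≤ x * sin η ^ 2 := by positivity
        rw [abs_mul, abs_mul (x * sin η ^ 2), abs_of_nonneg h1, abs_of_nonneg h2]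
    _ ≤ x * |sin η| * E * (2 * b) + x * sin η ^ 2 * (b * x * E) := by gcongr
    _ = _ := by ring

theorem phi1b_eq_mul_integral_phi1bIntegrand (hb0 : 0 ≤ b) (hb1 : b < 1) (x : ℝ) :
    phi1b b x = b * ∫ η in (0:ℝ)..2 * π, phi1bIntegrand b x η := by
  have hr η : circleDist b η ≠ 0 := (circleDist_pos hb0 hb1 η).ne'
  have hu : ∀ η ∈ Set.uIcc 0 (2 * π), HasDerivAt (fun η => exp (-x * circleDist b η))
      (exp (-x * circleDist b η) * (-x * (b * sin η / circleDist b η))) η :=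
    fun η _ => ((hasDerivAt_circleDist (hr η)).const_mul (-x)).exp
  have := continuous_circleDist b
  have hibp := intervalIntegral.integral_mul_deriv_eq_deriv_mul hu (fun η _ => hasDerivAt_sin η)
    (Continuous.intervalIntegrable (by fun_prop (disch := exact hr _)) _ _)
    (continuous_cos.intervalIntegrable _ _)
  change ∫ η in (0:ℝ)..2 * π, exp (-x * circleDist b η) * cos η = _
  rw [hibp, sin_two_pi, sin_zero, mul_zero, mul_zero, sub_zero, zero_sub,
    ← intervalIntegral.integral_neg, ← intervalIntegral.integral_const_mul]
  refine intervalIntegral.integral_congr fun η _ => ?_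
  simp only [phi1bIntegrand]
  ring

theorem integral_phi1bIntegrand_pos (hb0 : 0 ≤ b) (hb1 : b < 1) (hx : 0 < x) :
    0 < ∫ η in (0:ℝ)..2 * π, phi1bIntegrand b x η := by
  have hint := (continuous_phi1bIntegrand hb0 hb1 x).intervalIntegrable (μ := volume)
  rw [← intervalIntegral.integral_add_adjacent_intervals (hint 0 π) (hint π (2 * π))]
  exact add_pos_of_pos_of_nonneg
    (intervalIntegral.intervalIntegral_pos_of_pos_on (hint 0 π)
      (fun η hη => phi1bIntegrand_pos hx (sin_pos_of_pos_of_lt_pi hη.1 hη.2).ne') pi_pos)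
    (intervalIntegral.integral_nonneg (by linarith [pi_pos])
      fun η _ => phi1bIntegrand_nonneg hx.le η)

theorem integral_phi1bIntegrand_le (hb0 : 0 ≤ b) (hb1 : b < 1) (hx : 0 ≤ x) :
    ∫ η in (0:ℝ)..2 * π, phi1bIntegrand b x η ≤ 4 * x * exp (-(1 - b) * x) :=
  calc ∫ η in (0:ℝ)..2 * π, phi1bIntegrand b x η
      ≤ ∫ η in (0:ℝ)..2 * π, x * exp (-(1 - b) * x) * |sin η| :=
        intervalIntegral.integral_mono_on (by positivity)
          ((continuous_phi1bIntegrand hb0 hb1 x).intervalIntegrable _ _)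
          (Continuous.intervalIntegrable (by fun_prop) _ _)
          fun η _ => phi1bIntegrand_le hb0 hx η
    _ = 4 * x * exp (-(1 - b) * x) := by
        rw [intervalIntegral.integral_const_mul, integral_abs_sin_two_pi]
        ring

theorem abs_one_add_sq_mul_integral_phi1bIntegrand_sub_le (hb0 : 0 ≤ b) (hb1 : b < 1)
    (hx : 0 ≤ x) :
    |(1 + b ^ 2) * (∫ η in (0:ℝ)..2 * π, phi1bIntegrand b x η) - π * x * exp (-x)|
      ≤ b * x * exp (-(1 - b) * x) * (8 + π * x) := by
  set E := exp (-(1 - b) * x)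
  have hg := continuous_phi1bIntegrand hb0 hb1 x
  have hdiff : (1 + b ^ 2) * (∫ η in (0:ℝ)..2 * π, phi1bIntegrand b x η) - π * x * exp (-x)
      = ∫ η in (0:ℝ)..2 * π,
          ((1 + b ^ 2) * phi1bIntegrand b x η - x * exp (-x) * sin η ^ 2) := by
    rw [intervalIntegral.integral_sub (Continuous.intervalIntegrable (by fun_prop) _ _)
      (Continuous.intervalIntegrable (by fun_prop) _ _), intervalIntegral.integral_const_mul,
      intervalIntegral.integral_const_mul, integral_sin_sq_two_pi]
    ring
  rw [hdiff]
  calc _ ≤ ∫ η in (0:ℝ)..2 * π,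
          |(1 + b ^ 2) * phi1bIntegrand b x η - x * exp (-x) * sin η ^ 2| :=
        intervalIntegral.abs_integral_le_integral_abs (by positivity)
    _ ≤ ∫ η in (0:ℝ)..2 * π, (2 * b * x * E * |sin η| + b * x ^ 2 * E * sin η ^ 2) :=
        intervalIntegral.integral_mono_on (by positivity)
          (Continuous.intervalIntegrable (by fun_prop) _ _)
          (Continuous.intervalIntegrable (by fun_prop) _ _)
          fun η _ => abs_one_add_sq_mul_phi1bIntegrand_sub_le hb0 hb1 hx η
    _ = b * x * E * (8 + π * x) := by
        rw [intervalIntegral.integral_add (Continuous.intervalIntegrable (by fun_prop) _ _)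
          (Continuous.intervalIntegrable (by fun_prop) _ _),
          intervalIntegral.integral_const_mul, intervalIntegral.integral_const_mul,
          integral_abs_sin_two_pi, integral_sin_sq_two_pi]
        ring

end phi1bIntegrand

/-- For every `b ∈ (0,1)` and `x > 0`:
(i) `0 < b·φ_{1,b}(x) ≤ 4b²x·e^{−(1−b)x}`;
(ii) `|(b+1/b)·φ_{1,b}(x) − πx·e^{−x}| ≤ bx·e^{−(1−b)x}·(4π/(1−b)+4b+4πx)`. -/
theorem phi1b_estimates (b : ℝ) (hb : b ∈ Set.Ioo (0:ℝ) 1) (x : ℝ) (hx : 0 < x) :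
    (0 < b * phi1b b x ∧ b * phi1b b x ≤ 4*b^2*x*Real.exp (-(1-b)*x)) ∧
    |(b + 1/b) * phi1b b x - π*x*Real.exp (-x)|
      ≤ b*x*Real.exp (-(1-b)*x) * (4*π/(1-b) + 4*b + 4*π*x) := by
  obtain ⟨hb0, hb1⟩ := hb
  have hφ := phi1b_eq_mul_integral_phi1bIntegrand hb0.le hb1 x
  have hI_pos := integral_phi1bIntegrand_pos hb0.le hb1 hx
  have hI_le := integral_phi1bIntegrand_le hb0.le hb1 hx.le
  refine ⟨⟨by rw [hφ]; exact mul_pos hb0 (mul_pos hb0 hI_pos), ?_⟩, ?_⟩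
  · rw [hφ, ← mul_assoc, ← sq]
    calc b ^ 2 * _ ≤ b ^ 2 * (4 * x * exp (-(1 - b) * x)) := by gcongr
      _ = _ := by ring
  · have h8 : (8:ℝ) ≤ 4 * π / (1 - b) := by
      rw [le_div_iff₀ (by linarith)]
      nlinarith [pi_gt_three]
    have hcoeff : (b + 1/b) * b = 1 + b ^ 2 := by field_simp; ring
    rw [hφ, ← mul_assoc, hcoeff]
    refine (abs_one_add_sq_mul_integral_phi1bIntegrand_sub_le hb0.le hb1 hx.le).trans
      (mul_le_mul_of_nonneg_left ?_ (by positivity))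
    nlinarith [mul_pos pi_pos hx]

end DCV17
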